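/- Consider the index-2 Stokes-type DAE with E₁₁ ∈ ℂ^{n₁×n₁} invertible, A₁₁ ∈ ℂ^{n₁×n₁}, A₂₁ ∈ ℂ^{n₂×n₁} such that A₂₁ E₁₁^{-1} A₂₁ᵀ is invertible, B₁ ∈ ℂ^{n₁×m}, C₁ ∈ ℂ^{p×n₁}, D ∈ ℂ^{p×m}, transfer function G(s) = ℭ(s𝔼 − 𝔸)^{-1}𝔹 + D where 𝔼 = diag(E₁₁, 0), 𝔸 = [[A₁₁, A₂₁ᵀ],[A₂₁, 0]], 𝔹 = [B₁; 0], ℭ = [C₁, 0]. Let σ₁,…,σ_r ∈ ℂ, b₁,…,b_r ∈ ℂ^m, c₁,…,c_r ∈ ℂ^p, assume for each i the matrices [[σᵢE₁₁ − A₁₁, A₂₁ᵀ],[A₂₁, 0]] and [[σᵢE₁₁ᵀ − A₁₁ᵀ, A₂₁ᵀ],[A₂₁, 0]] are invertible, and let (vᵢ, zᵢ) and (wᵢ, qᵢ) solve [[σᵢE₁₁ − A₁₁, A₂₁ᵀ],[A₂₁, 0]][vᵢ; zᵢ] = [B₁ bᵢ; 0] and [[σᵢE₁₁ᵀ − A₁₁ᵀ,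 A₂₁ᵀ],[A₂₁, 0]][wᵢ; qᵢ] = [C₁ᵀ cᵢ; 0]. Set V = [v₁,…,v_r], W = [w₁,…,w_r] and G̃(s) = C₁V (s Wᵀ E₁₁ V − Wᵀ A₁₁ V)^{-1} Wᵀ B₁ + D. Then for each j such that σⱼ Wᵀ E₁₁ V − Wᵀ A₁₁ V is invertible, the left tangential interpolation condition cⱼᵀ G(σⱼ) = cⱼᵀ G̃(σⱼ) holds. -/

import Mathlib

/-!
Let `M = σⱼ𝔼 − 𝔸` be the full pencil at `σⱼ`. The left saddle-point system says that the row
vector `[wⱼ; −qⱼ]ᵀ` satisfies `[wⱼ; −qⱼ]ᵀ M = cⱼᵀ ℭ`, so `cⱼᵀ ℭ M⁻¹ 𝔹 = wⱼᵀ B₁`. On the reduced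
side, `A₂₁ V = 0` kills the `qⱼ` term, so `cⱼᵀ C₁ V` is the `j`-th row of the reduced pencil
`Wᵀ(σⱼE₁₁ − A₁₁)V`, and hence `cⱼᵀ C₁ V (Wᵀ(σⱼE₁₁ − A₁₁)V)⁻¹ Wᵀ B₁` is the `j`-th row of
`Wᵀ B₁`, which is again `wⱼᵀ B₁`.
-/

open Matrix

namespace Matrix

variable {l m n o p r α : Type*} [CommRing α]

theorem fromBlocks_mulVec_eq_sumElim_iff [Fintype l] [Fintype m] {A : Matrix n l α}
    {B : Matrix n m α} {C : Matrix o l α} {D : Matrix o m α} {x : l → α} {y : m → α}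
    {f : n → α} {g : o → α} :
    fromBlocks A B C D *ᵥ Sum.elim x y = Sum.elim f g ↔
      A *ᵥ x + B *ᵥ y = f ∧ C *ᵥ x + D *ᵥ y = g := by
  rw [fromBlocks_mulVec, Sum.elim_eq_iff, Sum.elim_comp_inl, Sum.elim_comp_inr]

theorem smul_fromBlocks_sub_fromBlocks (s : α) (E A : Matrix n l α) (B : Matrix n m α)
    (C : Matrix o l α) (D : Matrix o m α) :
    s • fromBlocks E 0 0 0 - fromBlocks A B C D = fromBlocks (s • E - A) (-B) (-C) (-D) := by
  rw [sub_eq_add_neg, fromBlocks_smul, fromBlocks_neg, fromBlocks_add]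
  simp [sub_eq_add_neg]

theorem isUnit_fromBlocks_neg_neg [Fintype n] [Fintype o] [DecidableEq n] [DecidableEq o]
    {A : Matrix n n α} {B : Matrix n o α} {C : Matrix o n α} {D : Matrix o o α}
    (h : IsUnit (fromBlocks A B C D)) : IsUnit (fromBlocks A (-B) (-C) D) := by
  set S : Matrix (n ⊕ o) (n ⊕ o) α := fromBlocks 1 0 0 (-1)
  have hS : IsUnit S := IsUnit.of_mul_eq_one S (by simp [S, fromBlocks_multiply])
  have hconj : fromBlocks A (-B) (-C) D = S * fromBlocks A B C D * S := by
    simp [S, fromBlocks_multiply]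
  rw [hconj]
  exact (hS.mul h).mul hS

theorem vecMul_mul_nonsing_inv_mul [Fintype m] [Fintype n] [DecidableEq n]
    {M : Matrix n n α} (hM : IsUnit M) {C : Matrix m n α} {x : m → α} {u : n → α}
    (h : u ᵥ* M = x ᵥ* C) (B : Matrix n o α) : x ᵥ* (C * M⁻¹ * B) = u ᵥ* B := by
  rw [Matrix.mul_assoc, ← vecMul_vecMul, ← h, vecMul_vecMul, ← Matrix.mul_assoc,
    mul_nonsing_inv _ ((isUnit_iff_isUnit_det M).1 hM), Matrix.one_mul]

theorem sumElim_vecMul_fromBlocks_neg_neg [Fintype n] [Fintype o] {K : Matrix n n α}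
    {B : Matrix o n α} {w : n → α} {q : o → α} {c : n → α}
    (hK : w ᵥ* K + q ᵥ* B = c) (hBw : B *ᵥ w = 0) :
    Sum.elim w (-q) ᵥ* fromBlocks K (-Bᵀ) (-B) 0 = Sum.elim c 0 := by
  simp [vecMul_fromBlocks, neg_vecMul, vecMul_neg, vecMul_transpose, hBw, hK]

theorem single_vecMul_transpose_mul_mul [Fintype n] [Fintype o] [Fintype p] [Fintype r]
    [DecidableEq r] {W V : Matrix n r α} {K : Matrix n n α} {B : Matrix o n α} {C : Matrix p n α} {j : r}
    {q : o → α} {c : p → α} (hK : Wᵀ j ᵥ* K + q ᵥ* B = c ᵥ* C) (hBV : B * V = 0) :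
    Pi.single j 1 ᵥ* (Wᵀ * K * V) = c ᵥ* (C * V) := by
  calc Pi.single j 1 ᵥ* (Wᵀ * K * V) = (Wᵀ j ᵥ* K + q ᵥ* B) ᵥ* V := by
        rw [add_vecMul, vecMul_vecMul q, hBV, vecMul_zero, add_zero, ← vecMul_vecMul,
          ← vecMul_vecMul, single_one_vecMul, row_apply']
    _ = c ᵥ* (C * V) := by rw [hK, vecMul_vecMul]

theorem mul_transpose_of_eq_zero [Fintype n] {B : Matrix o n α} {v : r → n → α}
    (h : ∀ i, B *ᵥ v i = 0) : B * (of v)ᵀ = 0 := by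
  ext k i
  simpa [mul_apply, mulVec, dotProduct] using congrFun (h i) k

end Matrix

theorem index2_left_tangential_interpolation_general
    (n₁ n₂ m p r : ℕ)
    (E₁₁ A₁₁ : Matrix (Fin n₁) (Fin n₁) ℂ)
    (A₂₁ : Matrix (Fin n₂) (Fin n₁) ℂ)
    (B₁ : Matrix (Fin n₁) (Fin m) ℂ)
    (C₁ : Matrix (Fin p) (Fin n₁) ℂ)
    (D : Matrix (Fin p) (Fin m) ℂ)
    (σ : Fin r → ℂ) (b : Fin r → Fin m → ℂ) (c : Fin r → Fin p → ℂ)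
    (v w : Fin r → Fin n₁ → ℂ) (z q : Fin r → Fin n₂ → ℂ)
    (hsadV : ∀ i, IsUnit (fromBlocks (σ i • E₁₁ - A₁₁) A₂₁ᵀ A₂₁ 0))
    (hv : ∀ i, (fromBlocks (σ i • E₁₁ - A₁₁) A₂₁ᵀ A₂₁ 0).mulVec
        (Sum.elim (v i) (z i)) = Sum.elim (B₁.mulVec (b i)) 0)
    (hw : ∀ i, (fromBlocks (σ i • E₁₁ᵀ - A₁₁ᵀ) A₂₁ᵀ A₂₁ 0).mulVec
        (Sum.elim (w i) (q i)) = Sum.elim (C₁ᵀ.mulVec (c i)) 0)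
    (V W : Matrix (Fin n₁) (Fin r) ℂ)
    (hV : V = (Matrix.of v)ᵀ)
    (hW : W = (Matrix.of w)ᵀ)
    (j : Fin r)
    (hred : IsUnit (σ j • (Wᵀ * E₁₁ * V) - Wᵀ * A₁₁ * V)) :
    Matrix.vecMul (c j)
        (fromCols C₁ (0 : Matrix (Fin p) (Fin n₂) ℂ)
          * (σ j • fromBlocks E₁₁ 0 0 0 - fromBlocks A₁₁ A₂₁ᵀ A₂₁ 0)⁻¹
          * fromRows B₁ (0 : Matrix (Fin n₂) (Fin m) ℂ) + D)
      = Matrix.vecMul (c j)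
          (C₁ * V * (σ j • (Wᵀ * E₁₁ * V) - Wᵀ * A₁₁ * V)⁻¹ * (Wᵀ * B₁) + D) := by
  obtain ⟨hwK, hBw⟩ := fromBlocks_mulVec_eq_sumElim_iff.1 (hw j)
  rw [← transpose_smul, ← transpose_sub, mulVec_transpose, mulVec_transpose,
    mulVec_transpose] at hwK
  rw [zero_mulVec, add_zero] at hBw
  have hBV : A₂₁ * V = 0 := hV ▸ mul_transpose_of_eq_zero fun i => by
    simpa using (fromBlocks_mulVec_eq_sumElim_iff.1 (hv i)).2
  have hWj : Wᵀ j = w j := by rw [hW]; rfl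
  have hreduced : σ j • (Wᵀ * E₁₁ * V) - Wᵀ * A₁₁ * V = Wᵀ * (σ j • E₁₁ - A₁₁) * V := by
    simp only [Matrix.mul_sub, Matrix.sub_mul, Matrix.mul_smul, Matrix.smul_mul]
  have hfull : Sum.elim (w j) (-q j) ᵥ* (σ j • fromBlocks E₁₁ 0 0 0 - fromBlocks A₁₁ A₂₁ᵀ A₂₁ 0)
      = c j ᵥ* fromCols C₁ 0 := by
    rw [smul_fromBlocks_sub_fromBlocks, neg_zero, vecMul_fromCols, vecMul_zero]
    exact sumElim_vecMul_fromBlocks_neg_neg hwK hBw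
  have hrow : Pi.single j 1 ᵥ* (σ j • (Wᵀ * E₁₁ * V) - Wᵀ * A₁₁ * V) = c j ᵥ* (C₁ * V) := by
    rw [hreduced]
    exact single_vecMul_transpose_mul_mul (hWj ▸ hwK) hBV
  have hM : IsUnit (σ j • fromBlocks E₁₁ 0 0 0 - fromBlocks A₁₁ A₂₁ᵀ A₂₁ 0) := by
    rw [smul_fromBlocks_sub_fromBlocks, neg_zero]
    exact isUnit_fromBlocks_neg_neg (hsadV j)
  rw [vecMul_add, vecMul_add, vecMul_mul_nonsing_inv_mul hM hfull,
    vecMul_mul_nonsing_inv_mul hred hrow, sumElim_vecMul_fromRows, vecMul_zero, add_zero,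
    ← vecMul_vecMul, single_one_vecMul, row_apply', hWj]

/-- Interpolatory model reduction for index-2 Stokes-type DAEs without spectral
projectors (left tangential condition).  The bases `V` and `W` are built from
solutions of the saddle-point systems; the reduced model interpolates `G` from
the left at each interpolation point. -/
theorem index2_left_tangential_interpolation
    (n₁ n₂ m p r : ℕ)
    (E₁₁ A₁₁ : Matrix (Fin n₁) (Fin n₁) ℂ)
    (A₂₁ : Matrix (Fin n₂) (Fin n₁) ℂ)
    (B₁ : Matrix (Fin n₁) (Fin m) ℂ)
    (C₁ : Matrix (Fin p) (Fin n₁) ℂ)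
    (D : Matrix (Fin p) (Fin m) ℂ)
    (hE : IsUnit E₁₁)
    (hSchur : IsUnit (A₂₁ * E₁₁⁻¹ * A₂₁ᵀ))
    (σ : Fin r → ℂ) (b : Fin r → Fin m → ℂ) (c : Fin r → Fin p → ℂ)
    (v w : Fin r → Fin n₁ → ℂ) (z q : Fin r → Fin n₂ → ℂ)
    (hsadV : ∀ i, IsUnit (fromBlocks (σ i • E₁₁ - A₁₁) A₂₁ᵀ A₂₁ 0))
    (hsadW : ∀ i, IsUnit (fromBlocks (σ i • E₁₁ᵀ - A₁₁ᵀ) A₂₁ᵀ A₂₁ 0))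
    (hv : ∀ i, (fromBlocks (σ i • E₁₁ - A₁₁) A₂₁ᵀ A₂₁ 0).mulVec
        (Sum.elim (v i) (z i)) = Sum.elim (B₁.mulVec (b i)) 0)
    (hw : ∀ i, (fromBlocks (σ i • E₁₁ᵀ - A₁₁ᵀ) A₂₁ᵀ A₂₁ 0).mulVec
        (Sum.elim (w i) (q i)) = Sum.elim (C₁ᵀ.mulVec (c i)) 0)
    (V W : Matrix (Fin n₁) (Fin r) ℂ)
    (hV : V = (Matrix.of v)ᵀ)
    (hW : W = (Matrix.of w)ᵀ)
    (j : Fin r)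
    (hred : IsUnit (σ j • (Wᵀ * E₁₁ * V) - Wᵀ * A₁₁ * V)) :
    Matrix.vecMul (c j)
        (fromCols C₁ (0 : Matrix (Fin p) (Fin n₂) ℂ)
          * (σ j • fromBlocks E₁₁ 0 0 0 - fromBlocks A₁₁ A₂₁ᵀ A₂₁ 0)⁻¹
          * fromRows B₁ (0 : Matrix (Fin n₂) (Fin m) ℂ) + D)
      = Matrix.vecMul (c j)
          (C₁ * V * (σ j • (Wᵀ * E₁₁ * V) - Wᵀ * A₁₁ * V)⁻¹ * (Wᵀ * B₁) + D) :=
  index2_left_tangential_interpolation_general n₁ n₂ m p r E₁₁ A₁₁ A₂₁ B₁ C₁ D σ b c v w z q hsadV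
    hv hw V W hV hW j hred
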